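/- For semi-implicit methods, the growth function 𝔡_s defined by 𝔡_s(∅)=0, 𝔡_s(•_l)=1, 𝔡_s([τ₁,…,τ_κ]_l)=1 for l>0, and for color-0 roots 𝔡_s([τ₁,…,τ_κ]_0) = max_j 𝔡_s(τ_j) if exactly one child attains the maximum and max_j 𝔡_s(τ_j)+1 otherwise, satisfies: if 𝔡_s(τ)=k with k≥1 then ρ(τ) ≥ (3/4)·2^k − 1. -/

import Mathlib

inductive CTree (m : ℕ) : Type
  | node : Fin (m + 1) → List (CTree m) → CTree m

namespace CTree

variable {m : ℕ}

def rho : CTree m → ℚ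
  | .node l ts => (if (l : ℕ) = 0 then 1 else 1/2) + (ts.attach.map (fun t => rho t.1)).sum
decreasing_by
  all_goals try simp only [CTree.node.sizeOf_spec, List.cons.sizeOf_spec, List.nil.sizeOf_spec]
  all_goals try have := List.sizeOf_lt_of_mem t.2
  all_goals omega

def height : CTree m → ℕ
  | .node _ ts => 1 + (ts.attach.map (fun t => height t.1)).foldr max 0
decreasing_by
  all_goals try simp only [CTree.node.sizeOf_spec, List.cons.sizeOf_spec, List.nil.sizeOf_spec]
  all_goals try have := List.sizeOf_lt_of_mem t.2
  all_goals omega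

def ram : CTree m → ℕ
  | .node _ [] => 1
  | .node _ [t] => ram t
  | .node _ ts => 1 + (ts.attach.map (fun t => ram t.1)).foldr max 0
decreasing_by
  all_goals try simp only [CTree.node.sizeOf_spec, List.cons.sizeOf_spec, List.nil.sizeOf_spec]
  all_goals try have := List.sizeOf_lt_of_mem t.2
  all_goals omega

def dbl : CTree m → ℕ
  | .node _ [] => 1
  | .node _ ts =>
      let ds := ts.attach.map (fun t => dbl t.1)
      let M := ds.foldr max 0
      if 2 ≤ ds.count M then M + 1 else M
decreasing_by
  all_goals try simp only [CTree.node.sizeOf_spec, List.cons.sizeOf_spec, List.nil.sizeOf_spec]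
  all_goals try have := List.sizeOf_lt_of_mem t.2
  all_goals omega


/-- semi-implicit height-type growth function 𝔥ₛ -/
def hs : CTree m → ℕ
  | .node l ts => if 0 < (l : ℕ) then 1 else 1 + (ts.attach.map (fun t => hs t.1)).foldr max 0
decreasing_by
  all_goals try simp only [CTree.node.sizeOf_spec, List.cons.sizeOf_spec, List.nil.sizeOf_spec]
  all_goals try have := List.sizeOf_lt_of_mem t.2
  all_goals omega

/-- semi-implicit ramification-type growth function 𝔯ₛ -/
def rs : CTree m → ℕ
  | .node _ [] => 1
  | .node l [t] => if 0 < (l : ℕ) then 1 else rs t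
  | .node l ts => if 0 < (l : ℕ) then 1 else 1 + (ts.attach.map (fun t => rs t.1)).foldr max 0
decreasing_by
  all_goals try simp only [CTree.node.sizeOf_spec, List.cons.sizeOf_spec, List.nil.sizeOf_spec]
  all_goals try have := List.sizeOf_lt_of_mem t.2
  all_goals omega

/-- semi-implicit doubling-type growth function 𝔡ₛ -/
def dsm : CTree m → ℕ
  | .node _ [] => 1
  | .node l ts =>
      if 0 < (l : ℕ) then 1 else
      let vals := ts.attach.map (fun t => dsm t.1)
      let M := vals.foldr max 0
      if 2 ≤ vals.count M then M + 1 else M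
decreasing_by
  all_goals try simp only [CTree.node.sizeOf_spec, List.cons.sizeOf_spec, List.nil.sizeOf_spec]
  all_goals try have := List.sizeOf_lt_of_mem t.2
  all_goals omega


end CTree

/-!
Induct on the tree, tracking the bound `b k = 3/4 * 2^k - 1`, which satisfies `b 1 = 1/2` and
`b (k + 1) = 2 * b k + 1`. A leaf or a root of positive colour has `𝔡ₛ = 1` and weight at least
`1/2`. At a root of colour `0` with `𝔡ₛ`-maximum `M` over the children: if `M` is attained only
once then `𝔡ₛ = M` and the maximising child alone already has weight `≥ b M`; if it is attained
at least twice then `𝔡ₛ = M + 1` and two such children plus the root give weight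
`≥ 2 * b M + 1 = b (M + 1)`.
-/

theorem List.foldr_max_bot_mem {α : Type*} [LinearOrder α] [OrderBot α] {l : List α}
    (hl : l ≠ []) : l.foldr max ⊥ ∈ l :=
  List.maximum_mem (List.foldr_max_of_ne_nil hl).symm

theorem List.nsmul_le_sum_map_of_le_count {α β M : Type*} [DecidableEq β] [AddCommMonoid M]
    [PartialOrder M] [IsOrderedAddMonoid M] (l : List α) (f : α → β) (g : α → M) {b : β} {c : M}
    {n : ℕ} (hg : ∀ a ∈ l, 0 ≤ g a) (hc : ∀ a ∈ l, f a = b → c ≤ g a)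
    (hn : n ≤ (l.map f).count b) : n • c ≤ (l.map g).sum := by
  obtain ⟨l', hl', hfl'⟩ := List.sublist_map_iff.1 (List.replicate_sublist_iff.2 hn)
  have hlen : l'.length = n := by simpa using (congrArg List.length hfl').symm
  have hb : ∀ a ∈ l', f a = b := fun a ha =>
    List.eq_of_mem_replicate (hfl' ▸ List.mem_map_of_mem ha)
  calc n • c = (l'.map g).length • c := by rw [List.length_map, hlen]
    _ ≤ (l'.map g).sum := List.card_nsmul_le_sum _ _ <| by
        simpa using fun a ha => hc a (hl'.subset ha) (hb a ha)
    _ ≤ (l.map g).sum := (hl'.map g).sum_le_sum (by simpa using hg)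

namespace CTree

variable {m : ℕ}

@[elab_as_elim]
theorem induction {motive : CTree m → Prop}
    (node : ∀ l ts, (∀ t ∈ ts, motive t) → motive (.node l ts)) : ∀ τ, motive τ
  | .node l ts => node l ts fun t _ => induction node t
decreasing_by
  simp only [CTree.node.sizeOf_spec]
  have := List.sizeOf_lt_of_mem ‹t ∈ ts›
  omega

theorem rho_node (l : Fin (m + 1)) (ts : List (CTree m)) :
    rho (node l ts) = (if (l : ℕ) = 0 then 1 else 1 / 2) + (ts.map rho).sum := by
  rw [rho, List.attach_map_val]

theorem dsm_node_eq_one {l : Fin (m + 1)} {ts : List (CTree m)} (h : (l : ℕ) ≠ 0 ∨ ts = []) :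
    dsm (node l ts) = 1 := by
  rcases ts with _ | ⟨t, ts⟩
  · rw [dsm]
  · rw [dsm] <;> simp [Nat.pos_of_ne_zero (h.resolve_right (List.cons_ne_nil t ts))]

theorem dsm_node_of_eq_zero {l : Fin (m + 1)} (hl : (l : ℕ) = 0) {ts : List (CTree m)}
    (hts : ts ≠ []) :
    dsm (node l ts) =
      if 2 ≤ (ts.map dsm).count ((ts.map dsm).foldr max 0) then (ts.map dsm).foldr max 0 + 1
      else (ts.map dsm).foldr max 0 := by
  obtain ⟨t, ts, rfl⟩ := List.exists_cons_of_ne_nil hts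
  rw [dsm] <;> simp [hl]

theorem half_le_rho (τ : CTree m) : 1 / 2 ≤ rho τ := by
  induction τ using induction with
  | node l ts ih =>
    have hsum : 0 ≤ (ts.map rho).sum :=
      List.sum_nonneg (by simpa using fun t ht => (ih t ht).trans' (by norm_num))
    rw [rho_node]
    split <;> linarith

theorem rho_nonneg (τ : CTree m) : 0 ≤ rho τ :=
  (half_le_rho τ).trans' (by norm_num)

def dsmBound (k : ℕ) : ℚ := 3 / 4 * 2 ^ k - 1

theorem dsmBound_one : dsmBound 1 = 1 / 2 := by
  norm_num [dsmBound]

theorem dsmBound_succ (k : ℕ) : dsmBound (k + 1) = 2 * dsmBound k + 1 := by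
  rw [dsmBound, dsmBound, pow_succ]
  ring

theorem dsmBound_dsm_le_rho (τ : CTree m) : dsmBound (dsm τ) ≤ rho τ := by
  induction τ using induction with
  | node l ts ih =>
    by_cases hroot : (l : ℕ) = 0 ∧ ts ≠ []
    swap
    · rw [dsm_node_eq_one (by tauto), dsmBound_one]
      exact half_le_rho _
    obtain ⟨hl, hts⟩ := hroot
    have hrho : ∀ t ∈ ts, 0 ≤ rho t := fun t _ => rho_nonneg t
    rw [dsm_node_of_eq_zero hl hts, rho_node, if_pos hl]
    split_ifs with hc
    · have hpair := List.nsmul_le_sum_map_of_le_count ts dsm rho hrho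
        (fun t ht htM => htM ▸ ih t ht) hc
      rw [two_nsmul] at hpair
      rw [dsmBound_succ]
      linarith
    · obtain ⟨t, ht, htM⟩ := List.mem_map.1 <|
        List.foldr_max_bot_mem (l := ts.map dsm) (by simpa using hts)
      calc dsmBound ((ts.map dsm).foldr max 0) = dsmBound (dsm t) := by rw [htM]; rfl
        _ ≤ rho t := ih t ht
        _ ≤ (ts.map rho).sum := List.single_le_sum (by simpa using hrho) _ (List.mem_map_of_mem ht)
        _ ≤ 1 + (ts.map rho).sum := by linarith

end CTree

open CTree in
theorem stmt11_general (m : ℕ) (τ : CTree m) (k : ℕ) (h : dsm τ = k) :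
    (3 : ℚ) / 4 * 2 ^ k - 1 ≤ rho τ := by
  simpa [dsmBound, h] using dsmBound_dsm_le_rho τ

open CTree in
theorem stmt11 (m : ℕ) (τ : CTree m) (k : ℕ) (hk : 1 ≤ k) (h : dsm τ = k) :
    (3 : ℚ) / 4 * 2 ^ k - 1 ≤ rho τ :=
  stmt11_general m τ k h
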